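/- arXiv:2601.22205 — 6 statements merged into one kernel-verified Lean document; each statement's English description precedes it below -/
import Mathlib

section
/- Let G be a finite group and H_1, H_2, H_3 subgroups such that H_i ∩ H_j = {e} for all i ≠ j and [G : H_i] = |H_i| = n for all i. Then the map L : G/H_1 × G/H_2 → G/H_3 defined by L(gH_1, gH_2) = gH_3 (using the bijection G ≃ G/H_1 × G/H_2) is a Latin square: for each fixed row gH_1, the map column ↦ symbol is a bijection, and for each fixed column gH_2, the map row ↦ symbol is a bijection. -/
/-!
Since `|H₁| |H₃| = |G|` and `H₁ ⊓ H₃ = ⊥`, the subgroups `H₁` and `H₃` are complements, so every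
left coset `gH₁` meets every left coset of `H₃`. Hence the entries `L (gH₁, gaH₂) = gaH₃`
(`a ∈ H₁`) of the row `gH₁` exhaust `G/H₃`; as there are as many columns as symbols, the row is
a bijection. Columns are rows of the transposed square.
-/

open Subgroup QuotientGroup

section

variable {G : Type*} [Group G]

lemma Subgroup.IsComplement'.exists_mem_mk_mul_eq {H K : Subgroup G} (h : IsComplement' H K)
    (g : G) (x : G ⧸ K) : ∃ a ∈ H, ((g * a : G) : G ⧸ K) = x := by
  obtain ⟨a, ha, -⟩ := isComplement_subgroup_right_iff_existsUnique_quotientGroupMk.mp h (g⁻¹ • x)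
  refine ⟨a, a.2, ?_⟩
  rw [← smul_eq_mul, ← MulAction.Quotient.smul_mk, ha, smul_inv_smul]

lemma surjective_row_of_isComplement' {H M K : Subgroup G} (hHK : IsComplement' H K)
    (L : (G ⧸ H) × (G ⧸ M) → G ⧸ K) (hL : ∀ g : G, L ((g : G ⧸ H), (g : G ⧸ M)) = g)
    (r : G ⧸ H) : Function.Surjective fun c : G ⧸ M => L (r, c) := by
  induction r using QuotientGroup.induction_on with | H g => ?_
  intro x
  obtain ⟨a, ha, hx⟩ := hHK.exists_mem_mk_mul_eq g x
  refine ⟨(g * a : G), ?_⟩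
  change L (↑g, ↑(g * a)) = x
  rw [← mk_mul_of_mem g ha, hL, hx]

lemma Subgroup.card_quotient_eq_of_card_eq [Finite G] {M K : Subgroup G}
    (h : Nat.card M = Nat.card K) : Nat.card (G ⧸ M) = Nat.card (G ⧸ K) := by
  rw [← index_eq_card, ← index_eq_card]
  refine Nat.eq_of_mul_eq_mul_right (Nat.card_pos (α := K)) ?_
  rw [index_mul_card, ← h, index_mul_card]

lemma bijective_row_of_isComplement' [Finite G] {H M K : Subgroup G} (hHK : IsComplement' H K)
    (hMK : Nat.card M = Nat.card K)
    (L : (G ⧸ H) × (G ⧸ M) → G ⧸ K) (hL : ∀ g : G, L ((g : G ⧸ H), (g : G ⧸ M)) = g)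
    (r : G ⧸ H) : Function.Bijective fun c : G ⧸ M => L (r, c) :=
  (Nat.bijective_iff_surjective_and_card _).mpr
    ⟨surjective_row_of_isComplement' hHK L hL r, card_quotient_eq_of_card_eq hMK⟩

end

theorem stmt1_general {G : Type*} [Group G] [Finite G] (n : ℕ)
    (hG : Nat.card G = n ^ 2)
    (H₁ H₂ H₃ : Subgroup G)
    (h1 : Nat.card H₁ = n) (h2 : Nat.card H₂ = n) (h3 : Nat.card H₃ = n)
    (h13 : H₁ ⊓ H₃ = ⊥) (h23 : H₂ ⊓ H₃ = ⊥)
    (L : (G ⧸ H₁) × (G ⧸ H₂) → G ⧸ H₃)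
    (hL : ∀ g : G, L ((g : G ⧸ H₁), (g : G ⧸ H₂)) = (g : G ⧸ H₃)) :
    (∀ r : G ⧸ H₁, Function.Bijective fun c : G ⧸ H₂ => L (r, c)) ∧
    (∀ c : G ⧸ H₂, Function.Bijective fun r : G ⧸ H₁ => L (r, c)) := by
  have complement {A B : Subgroup G} (hA : Nat.card A = n) (hB : Nat.card B = n)
      (hAB : A ⊓ B = ⊥) : IsComplement' A B :=
    isComplement'_of_card_mul_and_disjoint (by rw [hA, hB, hG, sq]) (disjoint_iff.mpr hAB)
  exact ⟨bijective_row_of_isComplement' (complement h1 h3 h13) (h2.trans h3.symm) L hL,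
    bijective_row_of_isComplement' (complement h2 h3 h23) (h1.trans h3.symm)
      (L ∘ Prod.swap) hL⟩

theorem stmt1 {G : Type*} [Group G] [Finite G] (n : ℕ)
    (hG : Nat.card G = n ^ 2)
    (H₁ H₂ H₃ : Subgroup G)
    (h1 : Nat.card H₁ = n) (h2 : Nat.card H₂ = n) (h3 : Nat.card H₃ = n)
    (h12 : H₁ ⊓ H₂ = ⊥) (h13 : H₁ ⊓ H₃ = ⊥) (h23 : H₂ ⊓ H₃ = ⊥)
    (L : (G ⧸ H₁) × (G ⧸ H₂) → G ⧸ H₃)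
    (hL : ∀ g : G, L ((g : G ⧸ H₁), (g : G ⧸ H₂)) = (g : G ⧸ H₃)) :
    (∀ r : G ⧸ H₁, Function.Bijective fun c : G ⧸ H₂ => L (r, c)) ∧
    (∀ c : G ⧸ H₂, Function.Bijective fun r : G ⧸ H₁ => L (r, c)) :=
  stmt1_general n hG H₁ H₂ H₃ h1 h2 h3 h13 h23 L hL
end

section
/- Let G be a finite group, and let H_1, …, H_{q+2} be subgroups with pairwise intersection equal to a common subgroup K, where [G : H_i] = [H_i : K] = n for all i. Suppose p is a prime with p^a dividing n, p^{a+1} not dividing n, and p not dividing |K|. Then there exist a Sylow p-subgroup P of G of order p^{2a} and subgroups Q_1, …, Q_{q+2} of P, each of order p^a, with Q_i ∩ Q_j trivial for i ≠ j. -/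
/-!
Since `[H_i : H_i ∩ H_j] = [G : H_j]`, the group `H_i` acts transitively on `G ⧸ H_j`, so
`G = H_i H_j`; consequently any conjugates `x H_i x⁻¹` and `y H_j y⁻¹` meet in a conjugate of
`K`. As `|G| = n² |K|`, a Sylow `p`-subgroup `P` of `G` has order `p ^ (2a)`. Each `H_i` contains
a subgroup of order `p ^ a`, which is conjugate into `P`; two such conjugates meet inside a
conjugate of `K`, whose order is prime to `p`, hence trivially.
-/

open Pointwise

namespace Subgroup

variable {G : Type*} [Group G]

theorem card_pointwise_smul {α : Type*} [Group α] [MulDistribMulAction α G] (a : α)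
    (S : Subgroup G) : Nat.card (a • S : Subgroup G) = Nat.card S :=
  (Nat.card_congr (equivSMul a S).toEquiv).symm

theorem coe_mul_coe_eq_univ_of_relIndex_eq_index {A B : Subgroup G} [A.FiniteIndex]
    (h : A.relIndex B = A.index) : (B : Set G) * (A : Set G) = Set.univ := by
  let f : B ⧸ A.subgroupOf B → G ⧸ A :=
    Quotient.map' Subtype.val fun _ _ hb =>
      QuotientGroup.leftRel_apply.mpr (QuotientGroup.leftRel_apply.mp hb : _ ∈ A.subgroupOf B)
  have hf : f.Injective := by
    rintro ⟨b₁⟩ ⟨b₂⟩ hb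
    exact Quotient.sound'
      (QuotientGroup.leftRel_apply.mpr (QuotientGroup.eq.mp hb : (b₁ : G)⁻¹ * b₂ ∈ A))
  have hfbij : f.Bijective := (Nat.bijective_iff_injective_and_card f).mpr ⟨hf, h⟩
  refine Set.eq_univ_of_forall fun g => ?_
  obtain ⟨⟨b⟩, hb⟩ := hfbij.surjective (g : G ⧸ A)
  exact Set.mem_mul.mpr
    ⟨b, b.2, (b : G)⁻¹ * g, QuotientGroup.eq.mp hb, mul_inv_cancel_left _ _⟩

theorem exists_conj_smul_inf_conj_smul_eq {A B : Subgroup G}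
    (hAB : (B : Set G) * (A : Set G) = Set.univ) (x y : G) :
    ∃ z : G, MulAut.conj x • A ⊓ MulAut.conj y • B = MulAut.conj z • (A ⊓ B) := by
  obtain ⟨b, hb, c, hc, hbc⟩ := Set.mem_mul.mp (hAB ▸ Set.mem_univ (y⁻¹ * x))
  have hx : x = y * b * c := by rw [mul_assoc, hbc, mul_inv_cancel_left]
  have hA : MulAut.conj x • A = MulAut.conj (y * b) • A := by
    rw [hx, map_mul, mul_smul, conj_smul_eq_self_of_mem hc]
  have hB : MulAut.conj y • B = MulAut.conj (y * b) • B := by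
    rw [map_mul, mul_smul, conj_smul_eq_self_of_mem hb]
  exact ⟨y * b, by rw [hA, hB, smul_inf]⟩

end Subgroup

section Sylow

variable {G : Type*} [Group G] [Finite G] {p : ℕ} [Fact p.Prime]

theorem Sylow.card_eq_pow_of_emultiplicity_eq (P : Sylow p G) {k : ℕ}
    (h : emultiplicity p (Nat.card G) = k) : Nat.card P = p ^ k := by
  rw [P.card_eq_multiplicity, Nat.factorization_def _ Fact.out]
  congr 1
  exact_mod_cast (padicValNat_eq_emultiplicity Nat.card_pos.ne').trans h

theorem IsPGroup.exists_conj_smul_le_sylow {S : Subgroup G} (hS : IsPGroup p S)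
    (P : Sylow p G) : ∃ g : G, MulAut.conj g • S ≤ P := by
  obtain ⟨R, hR⟩ := hS.exists_le_sylow
  obtain ⟨g, rfl⟩ := MulAction.exists_smul_eq G R P
  refine ⟨g, ?_⟩
  rw [Sylow.coe_subgroup_smul]
  exact Subgroup.pointwise_smul_le_pointwise_smul_iff.mpr hR

theorem Subgroup.exists_le_card_eq_prime_pow (H : Subgroup G) {a : ℕ} (h : p ^ a ∣ Nat.card H) :
    ∃ S ≤ H, Nat.card S = p ^ a := by
  obtain ⟨S, hS⟩ := Sylow.exists_subgroup_card_pow_prime p h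
  exact ⟨S.map H.subtype, map_subtype_le S, by rwa [card_map_of_injective H.subtype_injective]⟩

theorem Sylow.exists_le_conj_smul_card_eq_prime_pow (P : Sylow p G) (H : Subgroup G) {a : ℕ}
    (h : p ^ a ∣ Nat.card H) :
    ∃ Q ≤ (P : Subgroup G), Nat.card Q = p ^ a ∧ ∃ g : G, Q ≤ MulAut.conj g • H := by
  obtain ⟨S, hSH, hS⟩ := H.exists_le_card_eq_prime_pow h
  obtain ⟨g, hg⟩ := (IsPGroup.of_card hS).exists_conj_smul_le_sylow P
  exact ⟨_, hg, by rw [Subgroup.card_pointwise_smul, hS], g,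
    Subgroup.pointwise_smul_le_pointwise_smul_iff.mpr hSH⟩

end Sylow

theorem stmt4 {G : Type*} [Group G] [Finite G] (n q a p : ℕ) [Fact p.Prime]
    (H : Fin (q + 2) → Subgroup G) (K : Subgroup G)
    (hK : ∀ i j, i ≠ j → H i ⊓ H j = K)
    (hidx : ∀ i, (H i).index = n)
    (hidx' : ∀ i, (K.subgroupOf (H i)).index = n)
    (hpa : p ^ a ∣ n) (hpa' : ¬ p ^ (a + 1) ∣ n) (hpK : ¬ p ∣ Nat.card K) :
    ∃ P : Sylow p G, Nat.card P = p ^ (2 * a) ∧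
      ∃ Q : Fin (q + 2) → Subgroup G,
        (∀ i, Q i ≤ (P : Subgroup G)) ∧ (∀ i, Nat.card (Q i) = p ^ a) ∧
        ∀ i j, i ≠ j → Q i ⊓ Q j = ⊥ := by
  have hp : Prime p := Nat.Prime.prime Fact.out
  have hKH : K ≤ H 0 := hK 0 1 (by simp) ▸ inf_le_left
  have hcardG : Nat.card G = Nat.card K * (n * n) := by
    rw [← K.card_mul_index, ← Subgroup.relIndex_mul_index hKH, Subgroup.relIndex, hidx' 0,
      hidx 0]
  obtain ⟨P⟩ : Nonempty (Sylow p G) := inferInstance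
  have hcardP : Nat.card P = p ^ (2 * a) := by
    refine P.card_eq_pow_of_emultiplicity_eq ?_
    rw [hcardG, emultiplicity_mul hp, emultiplicity_mul hp, emultiplicity_eq_zero.mpr hpK,
      emultiplicity_eq_coe.mpr ⟨hpa, hpa'⟩]
    push_cast
    ring
  have hQ (i) := P.exists_le_conj_smul_card_eq_prime_pow (H i)
    (hpa.trans (hidx' i ▸ K.relIndex_dvd_card (H i)))
  choose Q hQP hQcard g hQH using hQ
  refine ⟨P, hcardP, Q, hQP, hQcard, fun i j hij => ?_⟩
  have hHH : (H j : Set G) * (H i : Set G) = Set.univ := by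
    refine Subgroup.coe_mul_coe_eq_univ_of_relIndex_eq_index ?_
    rw [← Subgroup.inf_relIndex_right, hK i j hij, hidx i]
    exact hidx' j
  obtain ⟨z, hz⟩ := Subgroup.exists_conj_smul_inf_conj_smul_eq hHH (g i) (g j)
  rw [hK i j hij] at hz
  have hdisj : Disjoint (Q i) (MulAut.conj z • K) := by
    refine Subgroup.disjoint_of_coprime_natCard ?_
    rw [hQcard, Subgroup.card_pointwise_smul]
    exact ((Nat.Prime.coprime_iff_not_dvd Fact.out).mpr hpK).pow_left a
  exact (hdisj.mono_left inf_le_left).eq_bot_of_le (hz ▸ inf_le_inf (hQH i) (hQH j))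
end

section
/- Let G be a group, and let (α, β, γ) be a triple of permutations of G satisfying γ(xy) = α(x)β(y) for all x, y ∈ G. Then the map φ : G → G defined by φ(z) = α(e)⁻¹ · γ(z) · β(e)⁻¹ is a group automorphism of G. -/
/-!
Putting `y = e` and `x = e` in `γ (x * y) = α x * β y` expresses `α` and `β` through `γ`:
`α x = γ x * (β e)⁻¹` and `β y = (α e)⁻¹ * γ y`. Substituting back, `γ (x * y) = γ x * (β e)⁻¹ (α e)⁻¹ * γ y`,
which says exactly that `z ↦ (α e)⁻¹ * γ z * (β e)⁻¹` is multiplicative; it is bijective because `γ` is.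
-/

section Autotopy

variable {G : Type*} [Group G] {α β γ : G → G}

theorem autotopy_left_eq (h : ∀ x y : G, γ (x * y) = α x * β y) (x : G) :
    α x = γ x * (β 1)⁻¹ := by
  rw [← mul_one x, h, mul_one, mul_inv_cancel_right]

theorem autotopy_right_eq (h : ∀ x y : G, γ (x * y) = α x * β y) (y : G) :
    β y = (α 1)⁻¹ * γ y := by
  rw [← one_mul y, h, one_mul, inv_mul_cancel_left]

theorem autotopy_normalize_mul (h : ∀ x y : G, γ (x * y) = α x * β y) (x y : G) :
    (α 1)⁻¹ * γ (x * y) * (β 1)⁻¹ =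
      (α 1)⁻¹ * γ x * (β 1)⁻¹ * ((α 1)⁻¹ * γ y * (β 1)⁻¹) := by
  rw [h, autotopy_left_eq h x, autotopy_right_eq h y]
  group

def MulEquiv.ofAutotopy (γ : G ≃ G) (h : ∀ x y : G, γ (x * y) = α x * β y) : G ≃* G where
  toEquiv := γ.trans ((Equiv.mulLeft (α 1)⁻¹).trans (Equiv.mulRight (β 1)⁻¹))
  map_mul' := autotopy_normalize_mul h

end Autotopy

theorem stmt8 {G : Type*} [Group G] (α β γ : Equiv.Perm G)
    (h : ∀ x y : G, γ (x * y) = α x * β y) :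
    ∃ φ : G ≃* G, ∀ z : G, φ z = (α 1)⁻¹ * γ z * (β 1)⁻¹ :=
  ⟨MulEquiv.ofAutotopy γ h, fun _ => rfl⟩
end

section
/- Let G be a group, L its Cayley table, and K(x,y) = x·μ(y) for a bijection μ : G → G with μ(e) = e. If (α, β, γ, δ) is an autotopy of the pair (L, K) — that is, γ(xy) = α(x)β(y) and δ(x·μ(y)) = α(x)·μ(β(y)) for all x, y — then writing (α, β, γ) = (aφ, φ(·)b⁻¹, aφ(·)b⁻¹) with φ ∈ Aut(G), the automorphism φ satisfies φ(μ(y))·μ(b⁻¹) = μ(φ(y)·b⁻¹) for all y ∈ G, and δ(z) = a·φ(z)·μ(b⁻¹). -/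
/-!
Putting `y = 1` in the second autotopy equation (and using `μ 1 = 1`) shows
`δ z = α z * μ (β 1) = a * φ z * μ b⁻¹`. Comparing this formula at `z = μ y` with the equation at
`x = 1` gives `a * φ (μ y) * μ b⁻¹ = a * μ (φ y * b⁻¹)`, and `a` cancels.
-/

section Autotopy

variable {M : Type*} [MulOneClass M] {μ α β δ : M → M}

theorem apply_eq_mul_map_apply_one (hμ : μ 1 = 1)
    (h : ∀ x y, δ (x * μ y) = α x * μ (β y)) (z : M) :
    δ z = α z * μ (β 1) := by
  simpa [hμ] using h z 1

theorem apply_map_mul_map_apply_one (hμ : μ 1 = 1)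
    (h : ∀ x y, δ (x * μ y) = α x * μ (β y)) (y : M) :
    α (μ y) * μ (β 1) = α 1 * μ (β y) := by
  rw [← apply_eq_mul_map_apply_one hμ h, ← h, one_mul]

end Autotopy

theorem stmt9_general {G : Type*} [Group G] (μ : Equiv.Perm G) (hμ : μ 1 = 1)
    (α β δ : Equiv.Perm G) (a b : G) (φ : G ≃* G)
    (hα : ∀ x, α x = a * φ x) (hβ : ∀ y, β y = φ y * b⁻¹)
    (h2 : ∀ x y : G, δ (x * μ y) = α x * μ (β y)) :
    (∀ y : G, φ (μ y) * μ b⁻¹ = μ (φ y * b⁻¹)) ∧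
      ∀ z : G, δ z = a * φ z * μ b⁻¹ := by
  have hβ1 : β 1 = b⁻¹ := by rw [hβ, map_one, one_mul]
  refine ⟨fun y => ?_, fun z => ?_⟩
  · have key := apply_map_mul_map_apply_one hμ h2 y
    rwa [hα, hα, hβ1, hβ, map_one, mul_one, mul_assoc, mul_right_inj] at key
  · rw [apply_eq_mul_map_apply_one hμ h2, hα, hβ1]

theorem stmt9 {G : Type*} [Group G] (μ : Equiv.Perm G) (hμ : μ 1 = 1)
    (α β γ δ : Equiv.Perm G) (a b : G) (φ : G ≃* G)
    (hα : ∀ x, α x = a * φ x) (hβ : ∀ y, β y = φ y * b⁻¹)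
    (hγ : ∀ z, γ z = a * φ z * b⁻¹)
    (h1 : ∀ x y : G, γ (x * y) = α x * β y)
    (h2 : ∀ x y : G, δ (x * μ y) = α x * μ (β y)) :
    (∀ y : G, φ (μ y) * μ b⁻¹ = μ (φ y * b⁻¹)) ∧
      ∀ z : G, δ z = a * φ z * μ b⁻¹ :=
  stmt9_general μ hμ α β δ a b φ hα hβ h2
end

section
/- Let G be a finite group with a normal Sylow p-subgroup P, and let (G, H_1, …, H_{q+2}, K) be a group packet with [G : H_i] = [H_i : K] = n, where p^a ∣ n and p^{a+1} ∤ n. Setting P_i = H_i ∩ P and P_K = K ∩ P, the tuple (P, P_1, …, P_{q+2}, P_K) satisfies P_i ∩ P_j = P_K for all i ≠ j, [P : P_i] = p^a, and [P_i : P_K] = p^a. -/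
/-!
For `P` a normal Sylow `p`-subgroup, `[G : H][H : H ∩ P] = [G : P][P : H ∩ P]`, where `[G : P]` is
prime to `p`, `[H : H ∩ P] = [HP : P]` divides it, and `[P : H ∩ P]` is a power of `p`. Comparing
`p`-parts, `[P : H ∩ P]` is the `p`-part of `[G : H]`; multiplicativity of indices along `K ≤ H`
gives the same for `[H ∩ P : K ∩ P]` and `[H : K]`. Finally the `p`-part of `n` is `p ^ a`.
-/

open Subgroup

lemma Nat.ordProj_eq_of_pow_dvd_of_not_pow_succ_dvd {p n a : ℕ} (hp : p.Prime)
    (ha : p ^ a ∣ n) (ha' : ¬p ^ (a + 1) ∣ n) : ordProj[p] n = p ^ a := by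
  have hn : n ≠ 0 := by rintro rfl; exact ha' (dvd_zero _)
  rw [hp.pow_dvd_iff_le_factorization hn] at ha ha'
  rw [le_antisymm (by omega) ha]

namespace Sylow

attribute [local instance] isFiniteRelIndex_of_finiteIndex

variable {G : Type*} [Group G] [Finite G] {p : ℕ} [Fact p.Prime] (P : Sylow p G)
  [(P : Subgroup G).Normal]

theorem relIndex_eq_ordProj_index (H : Subgroup G) :
    H.relIndex P = ordProj[p] H.index := by
  have hp : p.Prime := Fact.out
  have hindex : H.relIndex P * (P : Subgroup G).index = (P : Subgroup G).relIndex H * H.index := by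
    rw [← inf_relIndex_right, relIndex_mul_index inf_le_right, ← relIndex_mul_index inf_le_left,
      inf_relIndex_left]
  have hP : ¬p ∣ (P : Subgroup G).index := P.not_dvd_index
  have hPH : ¬p ∣ (P : Subgroup G).relIndex H :=
    fun h ↦ hP (h.trans (relIndex_dvd_index_of_normal _ _))
  obtain ⟨k, hk⟩ := IsPGroup.iff_card.mp P.isPGroup'
  obtain ⟨b, -, hb⟩ := (Nat.dvd_prime_pow hp).mp (hk ▸ H.relIndex_dvd_card (P : Subgroup G))
  have := congrArg (fun m ↦ ordProj[p] m) hindex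
  rw [Nat.ordProj_mul _ relIndex_ne_zero index_ne_zero_of_finite,
    Nat.ordProj_mul _ relIndex_ne_zero index_ne_zero_of_finite,
    Nat.factorization_eq_zero_of_not_dvd hP, Nat.factorization_eq_zero_of_not_dvd hPH, hb,
    Nat.factorization_pow_self hp] at this
  simpa [hb] using this

theorem inf_relIndex_inf_eq_ordProj_relIndex {H K : Subgroup G} (hKH : K ≤ H) :
    (K ⊓ P).relIndex (H ⊓ P) = ordProj[p] (K.relIndex H) := by
  have hmul := relIndex_mul_relIndex (K ⊓ P) (H ⊓ P) P (inf_le_inf_right _ hKH) inf_le_right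
  rw [inf_relIndex_right, inf_relIndex_right, relIndex_eq_ordProj_index,
    relIndex_eq_ordProj_index, ← relIndex_mul_index hKH,
    Nat.ordProj_mul _ relIndex_ne_zero index_ne_zero_of_finite] at hmul
  exact Nat.eq_of_mul_eq_mul_right (Nat.ordProj_pos _ _) hmul

end Sylow

theorem stmt13 {G : Type*} [Group G] [Finite G] (p n a q : ℕ) [Fact p.Prime]
    (P : Sylow p G) (hP : (P : Subgroup G).Normal)
    (H : Fin (q + 2) → Subgroup G) (K : Subgroup G)
    (hK : ∀ i j, i ≠ j → H i ⊓ H j = K)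
    (hidx : ∀ i, (H i).index = n)
    (hidx' : ∀ i, (K.subgroupOf (H i)).index = n)
    (hpa : p ^ a ∣ n) (hpa' : ¬ p ^ (a + 1) ∣ n) :
    (∀ i j, i ≠ j → (H i ⊓ (P : Subgroup G)) ⊓ (H j ⊓ (P : Subgroup G)) = K ⊓ (P : Subgroup G)) ∧
    (∀ i, ((H i ⊓ (P : Subgroup G)).subgroupOf (P : Subgroup G)).index = p ^ a) ∧
    (∀ i, ((K ⊓ (P : Subgroup G)).subgroupOf (H i ⊓ (P : Subgroup G))).index = p ^ a) := by
  have hn : ordProj[p] n = p ^ a := Nat.ordProj_eq_of_pow_dvd_of_not_pow_succ_dvd Fact.out hpa hpa'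
  have hKH (i : Fin (q + 2)) : K ≤ H i := by
    obtain ⟨j, hji⟩ := exists_ne i
    exact hK i j hji.symm ▸ inf_le_left
  have := hP
  refine ⟨fun i j hij ↦ by rw [inf_inf_inf_comm, inf_idem, hK i j hij], fun i ↦ ?_, fun i ↦ ?_⟩
  · change (H i ⊓ (P : Subgroup G)).relIndex P = p ^ a
    rw [inf_relIndex_right, P.relIndex_eq_ordProj_index, hidx i, hn]
  · change (K ⊓ (P : Subgroup G)).relIndex (H i ⊓ P) = p ^ a
    rw [P.inf_relIndex_inf_eq_ordProj_relIndex (hKH i), relIndex, hidx' i, hn]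
end

section
/- Let G be a group of order n² with three subgroups H_1, H_2, H_3 of order n pairwise intersecting trivially, and suppose additionally that H_1 and H_2 are normal in G. Then G is isomorphic to H_1 × H_2, and the Latin square L : G/H_1 × G/H_2 → G/H_3 defined by L(gH_1, gH_2) = gH_3 is isotopic to the Cayley table of H_2 (equivalently, of G/H_1): identifying G/H_1 ≅ H_2, G/H_2 ≅ H_1, and using that H_3 projects bijectively to both factors, L(h_2H_1, h_1H_2) = h_1h_2H_3 corresponds to a group multiplication. -/
/-!
Write `g = u * v` with `u ∈ H₂`, `v ∈ H₃`. The coset `g H₃` is determined by `u`, and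
`u = g * w⁻¹`, where `w` is the unique element of `H₃` with `w H₂ = g H₂`. Identifying
`G ⧸ H₃ ≃ H₂ ≃ G ⧸ H₁`, the coset `g H₃` therefore becomes `g H₁ * (w H₁)⁻¹`, and
`g H₂ ↦ (w H₁)⁻¹` is a bijection because `H₃` is a complement of both `H₁` and `H₂`.
Every pair `(g H₁, g H₂)` occurs since `H₁` and `H₂` are complements.
-/

namespace Subgroup

variable {G : Type*} [Group G]

theorem IsComplement'.surjective_mk_prod_mk {H K : Subgroup G} (h : IsComplement' H K) :
    Function.Surjective (fun g : G => ((g : G ⧸ H), (g : G ⧸ K))) := by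
  rintro ⟨a, b⟩
  induction a using QuotientGroup.induction_on with | H a => ?_
  induction b using QuotientGroup.induction_on with | H b => ?_
  obtain ⟨⟨p, q⟩, hpq, -⟩ := h.existsUnique (a⁻¹ * b)
  have hpq : (p : G) * q = a⁻¹ * b := hpq
  refine ⟨a * p, Prod.ext ?_ ?_⟩
  · exact QuotientGroup.eq.mpr (by simp)
  · refine QuotientGroup.eq.mpr ?_
    have : (a * p)⁻¹ * b = q := by rw [mul_inv_rev, mul_assoc, ← hpq]; group
    exact this ▸ q.2

theorem IsComplement'.coe_leftQuotientEquiv_mk {N K : Subgroup G} [N.Normal]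
    (h : IsComplement' N K) (g : G) :
    (h.leftQuotientEquiv (g : G ⧸ K) : G) = g * (h.symm.QuotientMulEquiv (g : G ⧸ N) : G)⁻¹ := by
  set v := h.symm.QuotientMulEquiv (g : G ⧸ N)
  have hv : ((v : G) : G ⧸ N) = g := h.symm.QuotientMulEquiv.symm_apply_apply _
  have hmem : g * (v : G)⁻¹ ∈ N := ‹N.Normal›.mem_comm (QuotientGroup.eq.mp hv)
  suffices h.leftQuotientEquiv (g : G ⧸ K) = ⟨g * (v : G)⁻¹, hmem⟩ from congrArg Subtype.val this
  rw [← Equiv.eq_symm_apply]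
  refine (QuotientGroup.eq.mpr ?_).symm
  simp

theorem IsComplement'.nonempty_mulEquiv_prod {H K : Subgroup G} [H.Normal] [K.Normal]
    (h : IsComplement' H K) : Nonempty (G ≃* H × K) := by
  let f : G →* (G ⧸ K) × (G ⧸ H) := (QuotientGroup.mk' K).prod (QuotientGroup.mk' H)
  have hf : Function.Bijective f := by
    refine ⟨(injective_iff_map_eq_one f).mpr fun g hg => ?_, h.symm.surjective_mk_prod_mk⟩
    have hg' : g ∈ K ⊓ H := by simpa [f, MonoidHom.mem_ker] using hg
    rwa [h.symm.disjoint.eq_bot, mem_bot] at hg'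
  exact ⟨(MulEquiv.ofBijective f hf).trans
    (h.QuotientMulEquiv.prodCongr h.symm.QuotientMulEquiv)⟩

theorem exists_equiv_quotient_mk_eq_mk_mul {H₁ H₂ H₃ : Subgroup G} [H₁.Normal] [H₂.Normal]
    (h₂₁ : IsComplement' H₂ H₁) (h₂₃ : IsComplement' H₂ H₃) (h₃₁ : IsComplement' H₃ H₁) :
    ∃ (eb : (G ⧸ H₂) ≃ (G ⧸ H₁)) (ec : (G ⧸ H₃) ≃ (G ⧸ H₁)),
      ∀ g : G, ec g = (g : G ⧸ H₁) * eb g := by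
  let φ : G ⧸ H₂ ≃* G ⧸ H₁ := h₂₃.symm.QuotientMulEquiv.trans h₃₁.QuotientMulEquiv.symm
  refine ⟨φ.toEquiv.trans (Equiv.inv _),
    h₂₃.leftQuotientEquiv.trans h₂₁.QuotientMulEquiv.symm.toEquiv, fun g => ?_⟩
  show ((h₂₃.leftQuotientEquiv (g : G ⧸ H₃) : G) : G ⧸ H₁) =
    g * (((h₂₃.symm.QuotientMulEquiv (g : G ⧸ H₂) : G) : G ⧸ H₁))⁻¹
  rw [h₂₃.coe_leftQuotientEquiv_mk, QuotientGroup.mk_mul, QuotientGroup.mk_inv]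

end Subgroup

open Subgroup

theorem stmt17 {G : Type*} [Group G] [Finite G] (n : ℕ)
    (hG : Nat.card G = n ^ 2)
    (H₁ H₂ H₃ : Subgroup G) [H₁.Normal] [H₂.Normal]
    (h1 : Nat.card H₁ = n) (h2 : Nat.card H₂ = n) (h3 : Nat.card H₃ = n)
    (h12 : H₁ ⊓ H₂ = ⊥) (h13 : H₁ ⊓ H₃ = ⊥) (h23 : H₂ ⊓ H₃ = ⊥) :
    Nonempty (G ≃* H₁ × H₂) ∧
    ∀ L : (G ⧸ H₁) × (G ⧸ H₂) → G ⧸ H₃,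
      (∀ g : G, L ((g : G ⧸ H₁), (g : G ⧸ H₂)) = (g : G ⧸ H₃)) →
      ∃ (ea : (G ⧸ H₁) ≃ (G ⧸ H₁)) (eb : (G ⧸ H₂) ≃ (G ⧸ H₁))
        (ec : (G ⧸ H₃) ≃ (G ⧸ H₁)),
        ∀ r c, ec (L (r, c)) = ea r * eb c := by
  have compl {H K : Subgroup G} (hH : Nat.card H = n) (hK : Nat.card K = n) (hHK : H ⊓ K = ⊥) :
      IsComplement' H K :=
    isComplement'_of_card_mul_and_disjoint (by rw [hH, hK, hG, sq]) (disjoint_iff.mpr hHK)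
  have h₁₂ := compl h1 h2 h12
  refine ⟨h₁₂.nonempty_mulEquiv_prod, fun L hL => ?_⟩
  obtain ⟨eb, ec, hmul⟩ :=
    exists_equiv_quotient_mk_eq_mk_mul h₁₂.symm (compl h2 h3 h23) (compl h1 h3 h13).symm
  refine ⟨Equiv.refl _, eb, ec, fun r c => ?_⟩
  obtain ⟨g, hg⟩ := h₁₂.surjective_mk_prod_mk (r, c)
  obtain ⟨rfl, rfl⟩ := Prod.mk.inj hg
  rw [hL, hmul]
  rfl
end
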